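/- Consider the MD LSTM Stable recursion where the truncated gradient satisfies ∂s^p/∂s^{p_in} = y_φ^p · ∑_{d=1}^D (∂s^{p_d^-}/∂s^{p_in}) · λ_d^p / (∑_{d'} λ_{d'}^p), with all y_φ^p ∈ [0,1] and all λ_d^p ∈ [0,1] with ∑_{d'} λ_{d'}^p > 0. Then by induction on ‖p - p_in‖_1, the truncated gradient ∂s^p/∂s^{p_in} lies in [0,1] for all p ≥ p_in. -/

import Mathlib

/-!
Strong induction along the (well-founded) componentwise order on `ℕ^D`: at `p ≠ p_in` the
recursion writes `g p` as `y_φ^p ∈ [0, 1]` times a convex combination, with weights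
`λ_d^p / ∑ λ^p`, of values of `g` at the strictly smaller points `p_d^-`, each of which lies in
`[0, 1]` by induction or vanishes by causality. Both operations preserve `[0, 1]`.
-/

open Function unitInterval

lemma sum_div_sum_mul_mem_unitInterval {ι : Type*} [Fintype ι] {w x : ι → ℝ}
    (hw : ∀ i, 0 ≤ w i) (hsum : 0 < ∑ i, w i) (hx : ∀ i, x i ∈ I) :
    ∑ i, (w i / ∑ j, w j) * x i ∈ I :=
  (convex_Icc 0 1).sum_mem (fun i _ => div_nonneg (hw i) hsum.le)
    (by rw [← Finset.sum_div, div_self hsum.ne']) (fun i _ => hx i)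

lemma ite_update_pred_mem_unitInterval {ι : Type*} [DecidableEq ι] {g : (ι → ℕ) → ℝ}
    {p : ι → ℕ} (h : ∀ q < p, g q ∈ I) (d : ι) :
    (if 0 < p d then g (update p d (p d - 1)) else 0) ∈ I := by
  split_ifs with hd
  · exact h _ (update_lt_self_iff.2 (Nat.sub_lt hd one_pos))
  · exact zero_mem

theorem stmt8 (D : ℕ) (pin : Fin D → ℕ) (g yφ : (Fin D → ℕ) → ℝ)
    (lam : (Fin D → ℕ) → Fin D → ℝ)
    (hφ : ∀ p, yφ p ∈ Set.Icc (0:ℝ) 1)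
    (hlam : ∀ p d, lam p d ∈ Set.Icc (0:ℝ) 1)
    (hS : ∀ p, 0 < ∑ d, lam p d)
    (hbase : g pin = 1)
    (hcausal : ∀ q, ¬ pin ≤ q → g q = 0)
    (hrec : ∀ p, pin ≤ p → p ≠ pin →
      g p = yφ p * ∑ d, (lam p d / ∑ d', lam p d') *
        (if 0 < p d then g (Function.update p d (p d - 1)) else 0)) :
    ∀ p, pin ≤ p → g p ∈ Set.Icc (0:ℝ) 1 := by
  have hg : ∀ p, g p ∈ I := by
    intro p
    induction p using WellFoundedLT.induction with
    | _ p ih =>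
      by_cases hp : pin ≤ p
      · by_cases hpin : p = pin
        · rw [hpin, hbase]
          exact one_mem
        rw [hrec p hp hpin]
        exact mul_mem (hφ p) (sum_div_sum_mul_mem_unitInterval (fun d => (hlam p d).1) (hS p)
          (ite_update_pred_mem_unitInterval ih))
      · rw [hcausal p hp]
        exact zero_mem
  exact fun p _ => hg p
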